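/- arXiv:2301.08707 — 4 statements merged into one kernel-verified Lean document; each statement's English description precedes it below -/
import Mathlib

section
/- Let P = u ⋯ v be a longest path of a graph G and let S = S_v(P). Then N_G(S) ⊆ N_P(S), i.e., every vertex outside S that is adjacent in G to a vertex of S is adjacent on the path P to a vertex of S. -/
open SimpleGraph

/-- `P'` is obtained from `P` by an *elementary exchange* fixing the common
endvertex `v`: writing `P = u ⋯ y x ⋯ v` where `x` is a neighbour of `u` in `G`
and `y = x⁻` is the vertex preceding `x` on `P`, the new path is
`P' = y ⋯ u x ⋯ v`, i.e. `P' = P - xy + ux`. -/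
def ElemExchange {V : Type*} (G : SimpleGraph V) (v : V) :
    (Σ u : V, G.Walk u v) → (Σ u : V, G.Walk u v) → Prop := fun P P' =>
  ∃ (u y x : V) (q : G.Walk u y) (r : G.Walk x v)
    (hyx : G.Adj y x) (hux : G.Adj u x),
      P = ⟨u, q.append (Walk.cons hyx r)⟩ ∧
      P' = ⟨y, q.reverse.append (Walk.cons hux r)⟩

/-- A walk is *derived* from `P` if it is obtained from `P` by a (possibly
empty) sequence of elementary exchanges fixing `v`. -/
def DerivedFrom {V : Type*} (G : SimpleGraph V) (v : V)
    (P Q : Σ u : V, G.Walk u v) : Prop :=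
  Relation.ReflTransGen (ElemExchange G v) P Q

/-- `posaSet G v P` is the set `S_v(P)` of endvertices, distinct from `v`,
of paths derived from `P`. -/
def posaSet {V : Type*} (G : SimpleGraph V) {u : V} (v : V) (P : G.Walk u v) :
    Set V :=
  {w | w ≠ v ∧ ∃ Q : G.Walk w v, DerivedFrom G v ⟨u, P⟩ ⟨w, Q⟩}

section Aux

variable {V : Type*} {G : SimpleGraph V} {v : V}

private lemma loop_path_len {w : V} {Q : G.Walk w w} (h : Q.IsPath) : Q.length = 0 := by
  cases Q with
  | nil => rfl
  | cons h' q =>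
    exfalso
    rw [Walk.isPath_def, Walk.support_cons] at h
    exact (List.nodup_cons.mp h).1 (q.end_mem_support)

private lemma endpoint_ne {w : V} {Q : G.Walk w v} (h : Q.IsPath) (hl : Q.length ≠ 0) :
    w ≠ v := by
  rintro rfl; exact hl (loop_path_len h)

private lemma step_props {P Q : Σ u : V, G.Walk u v} (h : ElemExchange G v P Q)
    (hp : P.2.IsPath) :
    Q.2.IsPath ∧ (∀ a, a ∈ Q.2.support ↔ a ∈ P.2.support) ∧
    Q.2.length = P.2.length ∧ 1 ≤ P.2.length ∧
    (∀ e ∈ Q.2.edges, e ∈ P.2.edges ∨ P.1 ∈ e) ∧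
    (∀ e ∈ P.2.edges, e ∈ Q.2.edges ∨ Q.1 ∈ e) := by
  obtain ⟨u, y, x, q, r, hyx, hux, hPeq, hQeq⟩ := h
  subst hPeq; subst hQeq
  dsimp only at hp ⊢
  have hsuppP : (q.append (Walk.cons hyx r)).support = q.support ++ r.support := by
    rw [Walk.support_append, Walk.support_cons, List.tail_cons]
  have hsuppQ : (q.reverse.append (Walk.cons hux r)).support
      = q.support.reverse ++ r.support := by
    rw [Walk.support_append, Walk.support_cons, List.tail_cons, Walk.support_reverse]
  have hperm : (q.support.reverse ++ r.support).Perm (q.support ++ r.support) :=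
    (q.support.reverse_perm).append_right _
  constructor
  · rw [Walk.isPath_def, hsuppQ, hperm.nodup_iff, ← hsuppP, ← Walk.isPath_def]
    exact hp
  refine ⟨?_, ?_, ?_, ?_, ?_⟩
  · intro a
    rw [hsuppP, hsuppQ]
    simp [List.mem_append]
  · simp [Walk.length_append, Walk.length_cons, Walk.length_reverse]
  · rw [Walk.length_append, Walk.length_cons]; omega
  · intro e he
    rw [Walk.edges_append, Walk.edges_cons, Walk.edges_reverse] at he
    rcases List.mem_append.mp he with h1 | h1
    · left
      rw [Walk.edges_append]
      exact List.mem_append.mpr (Or.inl (List.mem_reverse.mp h1))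
    · rcases List.mem_cons.mp h1 with rfl | h1
      · right; exact Sym2.mem_iff.mpr (Or.inl rfl)
      · left
        rw [Walk.edges_append, Walk.edges_cons]
        exact List.mem_append.mpr (Or.inr (List.mem_cons.mpr (Or.inr h1)))
  · intro e he
    rw [Walk.edges_append, Walk.edges_cons] at he
    rcases List.mem_append.mp he with h1 | h1
    · left
      rw [Walk.edges_append, Walk.edges_reverse]
      exact List.mem_append.mpr (Or.inl (List.mem_reverse.mpr h1))
    · rcases List.mem_cons.mp h1 with rfl | h1
      · right; exact Sym2.mem_iff.mpr (Or.inl rfl)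
      · left
        rw [Walk.edges_append, Walk.edges_cons]
        exact List.mem_append.mpr (Or.inr (List.mem_cons.mpr (Or.inr h1)))

private lemma derived_props {u : V} {P : G.Walk u v} (hp : P.IsPath)
    {Q : Σ w : V, G.Walk w v} (h : DerivedFrom G v ⟨u, P⟩ Q) :
    Q.2.IsPath ∧ (∀ a, a ∈ Q.2.support ↔ a ∈ P.support) ∧ Q.2.length = P.length ∧
    (∀ e ∈ Q.2.edges, e ∈ P.edges ∨ ∃ s ∈ posaSet G v P, s ∈ e) ∧
    (∀ e ∈ P.edges, e ∈ Q.2.edges ∨ ∃ s ∈ posaSet G v P, s ∈ e) := by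
  induction h with
  | refl => exact ⟨hp, fun a => Iff.rfl, rfl, fun e he => Or.inl he, fun e he => Or.inl he⟩
  | @tail b c hPb hbc ih =>
    obtain ⟨ihpath, ihsupp, ihlen, ihfwd, ihbwd⟩ := ih
    obtain ⟨cpath, csupp, clen, blen1, cfwd, cbwd⟩ := step_props hbc ihpath
    have hbS : b.1 ∈ posaSet G v P := by
      refine ⟨endpoint_ne ihpath (by omega), b.2, ?_⟩
      exact hPb
    have hcder : DerivedFrom G v ⟨u, P⟩ c := hPb.tail hbc
    have hcS : c.1 ∈ posaSet G v P := by
      refine ⟨endpoint_ne cpath (by omega), c.2, ?_⟩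
      exact hcder
    refine ⟨cpath, fun a => (csupp a).trans (ihsupp a), clen.trans ihlen, ?_, ?_⟩
    · intro e he
      rcases cfwd e he with h1 | h1
      · exact ihfwd e h1
      · exact Or.inr ⟨b.1, hbS, h1⟩
    · intro e he
      rcases ihbwd e he with h1 | h1
      · rcases cbwd e h1 with h2 | h2
        · exact Or.inl h2
        · exact Or.inr ⟨c.1, hcS, h2⟩
      · exact Or.inr h1

private lemma decompose_at : ∀ {x w : V} (Q : G.Walk x w) {y : V}, y ∈ Q.support → y ≠ x →
    ∃ (p : V) (q1 : G.Walk x p) (h : G.Adj p y) (q2 : G.Walk y w),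
      Q = q1.append (Walk.cons h q2)
  | x, _, Walk.nil, y, hy, hne => absurd (by simpa using hy) hne
  | x, w, Walk.cons (v := z) h q, y, hy, hne => by
    by_cases hz : z = y
    · subst hz
      exact ⟨x, Walk.nil, h, q, (Walk.nil_append _).symm⟩
    · have hy' : y ∈ q.support := by
        rw [Walk.support_cons] at hy
        rcases List.mem_cons.mp hy with rfl | h1
        · exact absurd rfl hne
        · exact h1
      obtain ⟨p, q1, hadj, q2, heq⟩ := decompose_at q hy' (fun h1 => hz h1.symm)
      exact ⟨p, Walk.cons h q1, hadj, q2, by rw [Walk.cons_append, ← heq]⟩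

private lemma edge_at_start {y w a : V} {Q : G.Walk y w} (hQ : Q.IsPath)
    (he : s(a, y) ∈ Q.edges) :
    ∃ (h : G.Adj y a) (q : G.Walk a w), Q = Walk.cons h q := by
  cases Q with
  | nil => simp at he
  | @cons _ z _ h q =>
    rw [Walk.edges_cons] at he
    rcases List.mem_cons.mp he with h1 | h1
    · rcases Sym2.eq_iff.mp h1 with ⟨_, h2⟩ | ⟨rfl, _⟩
      · exact absurd h2 h.ne
      · exact ⟨h, q, rfl⟩
    · exact absurd (q.snd_mem_support_of_mem_edges h1)
        ((Walk.cons_isPath_iff h q).mp hQ).2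

end Aux

/-- If `P = u ⋯ v` is a longest path of `G` and `S = S_v(P)`,
then `N_G(S) ⊆ N_P(S)`: every vertex outside `S` adjacent in `G` to a vertex
of `S` is joined by an edge of `P` to a vertex of `S`. -/
theorem posa_lemma_neighborhood_subset
    {V : Type*} [Fintype V] (G : SimpleGraph V) {u v : V} (P : G.Walk u v)
    (hP : P.IsPath)
    (hlongest : ∀ (a b : V) (Q : G.Walk a b), Q.IsPath → Q.length ≤ P.length) :
    {y | y ∉ posaSet G v P ∧ ∃ x ∈ posaSet G v P, G.Adj x y} ⊆
      {y | y ∉ posaSet G v P ∧ ∃ x ∈ posaSet G v P, s(x, y) ∈ P.edges} := by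
  rintro y ⟨hyS, x, hxS, hadj⟩
  refine ⟨hyS, ?_⟩
  obtain ⟨hxv, Q, hQder⟩ := hxS
  obtain ⟨hQpath, hQsupp, hQlen, hQfwd, hQbwd⟩ := derived_props hP hQder
  have hvS : v ∉ posaSet G v P := fun h => h.1 rfl
  have huv : u ≠ v := by
    rintro rfl
    have h0 : P.length = 0 := loop_path_len hP
    have h0' : Q.length = 0 := by rw [hQlen, h0]
    exact hxv (Walk.eq_of_length_eq_zero h0')
  have huS : u ∈ posaSet G v P := ⟨huv, P, Relation.ReflTransGen.refl⟩
  -- y lies on Q (hence on P), since otherwise we could extend Q to a longer path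
  have hysup : y ∈ Q.support := by
    by_contra hns
    have hcons : (Walk.cons hadj.symm Q).IsPath :=
      (Walk.cons_isPath_iff _ _).mpr ⟨hQpath, hns⟩
    have hle := hlongest _ _ _ hcons
    rw [Walk.length_cons, hQlen] at hle
    omega
  have hyP : y ∈ P.support := (hQsupp y).mp hysup
  by_cases hyv : y = v
  · -- `y = v`: the `P`-neighbour of `v` is in `S`
    subst hyv
    obtain ⟨p0, p1, hp0v, p2, hPdec⟩ := decompose_at P P.end_mem_support huv.symm
    have hea : s(p0, y) ∈ P.edges := by
      rw [hPdec, Walk.edges_append, Walk.edges_cons]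
      exact List.mem_append.mpr (Or.inr (List.mem_cons.mpr (Or.inl rfl)))
    refine ⟨p0, ?_, hea⟩
    rcases hQbwd _ hea with heQ | ⟨s, hsS, hs⟩
    · -- the edge `p0 v` is still on `Q`; rotate `Q` at `v` to put `p0` in `S`
      have heQ' : s(p0, y) ∈ Q.reverse.edges := by
        rw [Walk.edges_reverse]; exact List.mem_reverse.mpr heQ
      obtain ⟨h1, qr, hQr⟩ := edge_at_start hQpath.reverse heQ'
      have hQeq : Q = qr.reverse.append (Walk.cons h1.symm Walk.nil) := by
        have := congrArg Walk.reverse hQr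
        rwa [Walk.reverse_reverse, Walk.reverse_cons] at this
      have hex : ElemExchange G y ⟨x, Q⟩
          ⟨p0, qr.reverse.reverse.append (Walk.cons hadj Walk.nil)⟩ :=
        ⟨x, p0, y, qr.reverse, Walk.nil, h1.symm, hadj, by rw [hQeq], rfl⟩
      exact ⟨h1.ne', _, hQder.tail hex⟩
    · rcases Sym2.mem_iff.mp hs with rfl | rfl
      · exact hsS
      · exact absurd hsS hvS
  · -- `y ≠ v`: `y` is an interior vertex of `P`
    have hyu : y ≠ u := fun h => hyS (h ▸ huS)
    obtain ⟨a, p1, hay, p2, hPdec⟩ := decompose_at P hyP hyu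
    cases p2 with
    | nil => exact absurd rfl hyv
    | @cons _ b _ h2 p2' =>
      have hea : s(a, y) ∈ P.edges := by
        rw [hPdec, Walk.edges_append, Walk.edges_cons]
        exact List.mem_append.mpr (Or.inr (List.mem_cons.mpr (Or.inl rfl)))
      have heb : s(y, b) ∈ P.edges := by
        rw [hPdec, Walk.edges_append, Walk.edges_cons, Walk.edges_cons]
        exact List.mem_append.mpr (Or.inr (List.mem_cons.mpr (Or.inr
          (List.mem_cons.mpr (Or.inl rfl)))))
      have hab : a ≠ b := by
        have hnd := (Walk.isPath_def _).mp hP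
        rw [hPdec, Walk.support_append, Walk.support_cons, List.tail_cons,
          Walk.support_cons] at hnd
        have hdisj := List.disjoint_of_nodup_append hnd
        intro h
        subst h
        exact hdisj p1.end_mem_support (List.mem_cons.mpr (Or.inr p2'.start_mem_support))
      by_cases haS : a ∈ posaSet G v P
      · exact ⟨a, haS, hea⟩
      by_cases hbS : b ∈ posaSet G v P
      · exact ⟨b, hbS, Sym2.eq_swap ▸ heb⟩
      exfalso
      -- both of `y`'s `P`-edges survive on `Q`
      have heaQ : s(a, y) ∈ Q.edges := by
        rcases hQbwd _ hea with h1 | ⟨s, hsS, hs⟩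
        · exact h1
        · rcases Sym2.mem_iff.mp hs with rfl | rfl
          exacts [absurd hsS haS, absurd hsS hyS]
      have hebQ : s(y, b) ∈ Q.edges := by
        rcases hQbwd _ heb with h1 | ⟨s, hsS, hs⟩
        · exact h1
        · rcases Sym2.mem_iff.mp hs with rfl | rfl
          exacts [absurd hsS hyS, absurd hsS hbS]
      -- rotate `Q` at `y`: the `Q`-predecessor `p` of `y` lands in `S`
      obtain ⟨p, q1, hpy, q2, hQdec⟩ := decompose_at Q hysup hadj.ne'
      have hndQ := (Walk.isPath_def _).mp hQpath
      rw [hQdec, Walk.support_append, Walk.support_cons, List.tail_cons] at hndQ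
      have hdisjQ := List.disjoint_of_nodup_append hndQ
      have hpv : p ≠ v := by
        intro h
        subst h
        exact hdisjQ q1.end_mem_support q2.end_mem_support
      have hpS : p ∈ posaSet G v P := by
        refine ⟨hpv, q1.reverse.append (Walk.cons hadj q2), hQder.tail ?_⟩
        exact ⟨x, p, y, q1, q2, hpy, hadj, by rw [hQdec], rfl⟩
      have hpa : p ≠ a := fun h => haS (h ▸ hpS)
      have hpb : p ≠ b := fun h => hbS (h ▸ hpS)
      have hynq1 : y ∉ q1.support := fun h =>
        hdisjQ h q2.start_mem_support
      rw [hQdec, Walk.edges_append, Walk.edges_cons] at heaQ hebQ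
      have heaq2 : s(a, y) ∈ q2.edges := by
        rcases List.mem_append.mp heaQ with h1 | h1
        · exact absurd (q1.snd_mem_support_of_mem_edges h1) hynq1
        · rcases List.mem_cons.mp h1 with h1 | h1
          · rcases Sym2.eq_iff.mp h1 with ⟨rfl, _⟩ | ⟨_, h3⟩
            · exact absurd rfl hpa.symm
            · exact absurd h3 hpy.ne'
          · exact h1
      have hebq2 : s(y, b) ∈ q2.edges := by
        rcases List.mem_append.mp hebQ with h1 | h1
        · exact absurd (q1.fst_mem_support_of_mem_edges h1) hynq1
        · rcases List.mem_cons.mp h1 with h1 | h1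
          · rcases Sym2.eq_iff.mp h1 with ⟨h3, _⟩ | ⟨_, rfl⟩
            · exact absurd h3.symm hpy.ne
            · exact absurd rfl hpb.symm
          · exact h1
      have hq2path : q2.IsPath := by
        have h0 : (q1.append (Walk.cons hpy q2)).IsPath := by rw [← hQdec]; exact hQpath
        exact ((Walk.cons_isPath_iff _ _).mp h0.of_append_right).1
      obtain ⟨ha1, qa, hQa⟩ := edge_at_start hq2path heaq2
      obtain ⟨hb1, qb, hQb⟩ := edge_at_start hq2path (Sym2.eq_swap ▸ hebq2)
      apply hab
      have h1 : a = q2.getVert 1 := by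
        rw [hQa, Walk.getVert_cons_succ, Walk.getVert_zero]
      have h2 : b = q2.getVert 1 := by
        rw [hQb, Walk.getVert_cons_succ, Walk.getVert_zero]
      rw [h1, h2]
end

section
/- Let P = u ⋯ v be a path of a graph G and let S = S_v(P). If an elementary exchange fixing v applied to a path derived from P removes an edge ab, then a ∈ S or b ∈ S. -/
open SimpleGraph

lemma elem_isPath {V : Type*} {G : SimpleGraph V} {v : V}
    {P Q : Σ u : V, G.Walk u v} (h : ElemExchange G v P Q)
    (hp : P.2.IsPath) : Q.2.IsPath := by
  obtain ⟨u, y, x, q, r, hyx, hux, hPe, hQe⟩ := h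
  subst hPe; subst hQe
  simp only [Walk.isPath_def, Walk.support_append, Walk.support_cons,
    Walk.support_reverse, List.tail_cons] at *
  rw [List.nodup_append] at hp ⊢
  refine ⟨List.nodup_reverse.mpr hp.1, hp.2.1, ?_⟩
  intro z hz hz'
  exact hp.2.2 z (List.mem_reverse.mp hz) hz'

lemma derived_isPath {V : Type*} {G : SimpleGraph V} {v : V}
    {P Q : Σ u : V, G.Walk u v} (h : DerivedFrom G v P Q)
    (hp : P.2.IsPath) : Q.2.IsPath := by
  induction h with
  | refl => exact hp
  | tail _ hstep ih => exact elem_isPath hstep ih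

/-- Let `P = u ⋯ v` be a path of `G` and `S = S_v(P)`. If an
elementary exchange fixing `v` applied to a path `Q` derived from `P` removes
an edge `ab` (that is, `Q = u' ⋯ a b ⋯ v` with `b` a neighbour of `u'`, and
the exchange replaces the edge `ab` by `u'b`), then `a ∈ S` or `b ∈ S`. -/
theorem posa_removed_edge_mem
    {V : Type*} (G : SimpleGraph V) {u v : V} (P : G.Walk u v) (hP : P.IsPath)
    (Q : Σ u' : V, G.Walk u' v) (hQ : DerivedFrom G v ⟨u, P⟩ Q)
    (u' a b : V) (q : G.Walk u' a) (r : G.Walk b v)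
    (hab : G.Adj a b) (hu'b : G.Adj u' b)
    (hQeq : Q = ⟨u', q.append (Walk.cons hab r)⟩) :
    a ∈ posaSet G v P ∨ b ∈ posaSet G v P := by
  subst hQeq
  have hQpath : (q.append (Walk.cons hab r)).IsPath := derived_isPath hQ hP
  have hav : a ≠ v := by
    intro hv
    have h := hQpath.support_nodup
    rw [Walk.support_append, Walk.support_cons, List.tail_cons,
      List.nodup_append] at h
    exact h.2.2 a q.end_mem_support a (hv ▸ r.end_mem_support) rfl
  left
  refine ⟨hav, q.reverse.append (Walk.cons hu'b r), ?_⟩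
  exact Relation.ReflTransGen.tail hQ ⟨u', a, b, q, r, hab, hu'b, rfl, rfl⟩
end

section
/- Let P = v_1 v_2 ⋯ v_m be a path and let M = {x_1 y_1, …, x_s y_s} be a set of pairwise nested chords of P (that is, writing each chord x_t y_t with x_t earlier than y_t on P, the x_t are in increasing order along P and the y_t are in decreasing order along P). Then the graph whose edge set is E(P) ∪ M contains a path whose edge set contains all edges of M and is contained in M ∪ E(P). -/
open SimpleGraph

lemma seg_walk {V : Type*} {G : SimpleGraph V} (m : ℕ) (v : ℕ → V)
    (hadj : ∀ i, i + 1 < m → G.Adj (v i) (v (i+1))) :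
    ∀ (n i : ℕ), i + n < m → ∃ W : G.Walk (v i) (v (i+n)),
      W.support = (List.range (n+1)).map (fun k => v (i+k)) ∧
      ∀ e ∈ W.edges, ∃ j, j + 1 < m ∧ e = s(v j, v (j+1)) := by
  intro n
  induction n with
  | zero =>
    intro i hi
    exact ⟨Walk.nil, by simp [List.range_succ], by simp⟩
  | succ n ih =>
    intro i hi
    obtain ⟨W', hs', he'⟩ := ih (i+1) (by omega)
    have hcast : i + 1 + n = i + (n+1) := by omega
    refine ⟨Walk.cons (hadj i (by omega)) (W'.copy rfl (by rw [hcast])), ?_, ?_⟩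
    · rw [Walk.support_cons, Walk.support_copy, hs', List.range_succ_eq_map (n := n+1),
        List.map_cons, List.map_map]
      congr 1
      apply List.map_congr_left
      intro k _
      simp only [Function.comp]
      congr 1
      omega
    · intro e hee
      rw [Walk.edges_cons, Walk.edges_copy, List.mem_cons] at hee
      rcases hee with he | he
      · exact ⟨i, by omega, he⟩
      · exact he' e he

lemma nested_aux {V : Type*} {G : SimpleGraph V} :
    ∀ (s m : ℕ) (v : ℕ → V) (x y : ℕ → ℕ),
      (∀ i j, i < m → j < m → v i = v j → i = j) →
      (∀ i, i + 1 < m → G.Adj (v i) (v (i+1))) →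
      (∀ t t', t < t' → t' < s → x t < x t') →
      (∀ t t', t < t' → t' < s → y t' < y t) →
      (∀ t, t < s → x t < y t) →
      (∀ t, t < s → y t < m) →
      (∀ t, t < s → G.Adj (v (x t)) (v (y t))) →
      0 < s →
      ∃ (d : V) (Q : G.Walk (v (x 0)) d), Q.IsPath ∧
        (∀ u ∈ Q.support, ∃ i, x 0 ≤ i ∧ i ≤ y 0 ∧ u = v i) ∧
        (∀ t, t < s → s(v (x t), v (y t)) ∈ Q.edges) ∧
        (∀ e ∈ Q.edges,
          (∃ j, j + 1 < m ∧ e = s(v j, v (j+1))) ∨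
          ∃ t, t < s ∧ e = s(v (x t), v (y t))) := by
  intro s
  induction s with
  | zero => intro m v x y _ _ _ _ _ _ _ h; omega
  | succ s ih =>
    intro m v x y hinj hadjP hx hy hxy hym hadjC _
    have hy0m : y 0 < m := hym 0 (by omega)
    have hx0y0 : x 0 < y 0 := hxy 0 (by omega)
    rcases Nat.eq_zero_or_pos s with hs | hs
    · -- base case: a single chord
      subst hs
      refine ⟨v (y 0), Walk.cons (hadjC 0 (by omega)) Walk.nil, ?_, ?_, ?_, ?_⟩
      · rw [Walk.isPath_def, Walk.support_cons, Walk.support_nil]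
        refine List.nodup_cons.2 ⟨?_, List.nodup_singleton _⟩
        intro hmem
        rcases List.mem_singleton.1 hmem with h
        exact absurd (hinj _ _ (by omega) hy0m h) (by omega)
      · intro u hu
        rcases List.mem_cons.1 hu with h | h
        · exact ⟨x 0, le_refl _, by omega, h⟩
        · exact ⟨y 0, by omega, le_refl _, List.mem_singleton.1 h⟩
      · intro t ht
        interval_cases t
        simp [Walk.edges_cons]
      · intro e he
        rcases List.mem_cons.1 he with h | h
        · exact Or.inr ⟨0, by omega, h⟩
        · simp at h
    · -- inductive step
      have hx01 : x 0 < x 1 := hx 0 1 (by omega) (by omega)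
      have hx1y1 : x 1 < y 1 := hxy 1 (by omega)
      have hy10 : y 1 < y 0 := hy 0 1 (by omega) (by omega)
      have hy1m : y 1 < m := by omega
      -- apply IH to the reversed sequence
      obtain ⟨d, Q', hQ'path, hQ'supp, hQ'chords, hQ'edges⟩ :=
        ih m (fun i => v (m - 1 - i)) (fun t => m - 1 - y (t+1)) (fun t => m - 1 - x (t+1))
          (by
            intro i j hi hj hij
            have := hinj _ _ (by omega) (by omega) hij
            omega)
          (by
            intro i hi
            have h1 : m - 1 - (i+1) + 1 = m - 1 - i := by omega
            have := hadjP (m - 1 - (i+1)) (by omega)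
            rw [h1] at this
            exact this.symm)
          (by
            intro t t' htt' ht'
            show m - 1 - y (t+1) < m - 1 - y (t'+1)
            have h1 := hy (t+1) (t'+1) (by omega) (by omega)
            have h2 := hym (t+1) (by omega)
            omega)
          (by
            intro t t' htt' ht'
            show m - 1 - x (t'+1) < m - 1 - x (t+1)
            have h1 := hx (t+1) (t'+1) (by omega) (by omega)
            have h2 := hxy (t'+1) (by omega)
            have h3 := hym (t'+1) (by omega)
            omega)
          (by
            intro t ht
            show m - 1 - y (t+1) < m - 1 - x (t+1)
            have h1 := hxy (t+1) (by omega)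
            have h2 := hym (t+1) (by omega)
            omega)
          (by
            intro t ht
            show m - 1 - x (t+1) < m
            have h2 := hym (t+1) (by omega)
            omega)
          (by
            intro t ht
            have h2 := hym (t+1) (by omega)
            have h3 := hxy (t+1) (by omega)
            have e1 : m - 1 - (m - 1 - y (t+1)) = y (t+1) := by omega
            have e2 : m - 1 - (m - 1 - x (t+1)) = x (t+1) := by omega
            show G.Adj (v (m - 1 - (m - 1 - y (t+1)))) (v (m - 1 - (m - 1 - x (t+1))))
            rw [e1, e2]
            exact (hadjC (t+1) (by omega)).symm)
          hs
      simp only [Nat.zero_add] at hQ'supp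
      have ev1 : m - 1 - (m - 1 - y 1) = y 1 := by omega
      -- the walk Q'' starting at v (y 1)
      set Q'' : G.Walk (v (y 1)) d := Q'.copy (by rw [ev1]) rfl with hQ''def
      have hQ''supp : Q''.support = Q'.support := Walk.support_copy _ _ _
      have hQ''edges : Q''.edges = Q'.edges := Walk.edges_copy _ _ _
      -- vertices of Q'' have positions in [x 1, y 1]
      have hQ''pos : ∀ u ∈ Q''.support, ∃ i, x 1 ≤ i ∧ i ≤ y 1 ∧ u = v i := by
        intro u hu
        rw [hQ''supp] at hu
        obtain ⟨i, hi1, hi2, hi3⟩ := hQ'supp u hu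
        refine ⟨m - 1 - i, by omega, by omega, hi3⟩
      -- the descending segment from v (y 0) to v (y 1)
      obtain ⟨W, hWsupp, hWedges⟩ := seg_walk m v hadjP (y 0 - y 1) (y 1) (by omega)
      have ecast : y 1 + (y 0 - y 1) = y 0 := by omega
      set W' : G.Walk (v (y 0)) (v (y 1)) := (W.copy rfl (by rw [ecast])).reverse with hW'def
      have hW'supp : W'.support = W.support.reverse := by
        rw [hW'def, Walk.support_reverse, Walk.support_copy]
      have hW'edges : ∀ e ∈ W'.edges, ∃ j, j + 1 < m ∧ e = s(v j, v (j+1)) := by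
        intro e he
        rw [hW'def, Walk.edges_reverse, List.mem_reverse, Walk.edges_copy] at he
        exact hWedges e he
      have hWpos : ∀ u ∈ W'.support, ∃ i, y 1 ≤ i ∧ i ≤ y 0 ∧ u = v i := by
        intro u hu
        rw [hW'supp, List.mem_reverse, hWsupp, List.mem_map] at hu
        obtain ⟨k, hk, rfl⟩ := hu
        rw [List.mem_range] at hk
        exact ⟨y 1 + k, by omega, by omega, rfl⟩
      refine ⟨d, Walk.cons (hadjC 0 (by omega)) (W'.append Q''), ?_, ?_, ?_, ?_⟩
      · -- IsPath
        rw [Walk.isPath_def, Walk.support_cons, Walk.support_append]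
        refine List.nodup_cons.2 ⟨?_, ?_⟩
        · intro hmem
          rcases List.mem_append.1 hmem with h | h
          · obtain ⟨i, hi1, hi2, hi3⟩ := hWpos _ h
            have := hinj _ _ (by omega) (by omega) hi3
            omega
          · obtain ⟨i, hi1, hi2, hi3⟩ := hQ''pos _ (List.mem_of_mem_tail h)
            have := hinj _ _ (by omega) (by omega) hi3
            omega
        · refine List.nodup_append.2 ⟨?_, ?_, ?_⟩
          · rw [hW'supp]
            refine List.nodup_reverse.2 ?_
            rw [hWsupp]
            refine List.Nodup.map_on ?_ List.nodup_range
            intro k hk k' hk' hvv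
            rw [List.mem_range] at hk hk'
            have := hinj _ _ (by omega) (by omega) hvv
            omega
          · have hQ''nodup : Q''.support.Nodup := hQ''supp ▸ hQ'path.support_nodup
            exact hQ''nodup.sublist (List.tail_sublist _)
          · intro u hu w hu' huw
            subst huw
            obtain ⟨i, hi1, hi2, hi3⟩ := hWpos _ hu
            obtain ⟨i', hi1', hi2', hi3'⟩ := hQ''pos _ (List.mem_of_mem_tail hu')
            have hii : i = i' := hinj _ _ (by omega) (by omega) (hi3 ▸ hi3' ▸ rfl)
            have hiy1 : i = y 1 := by omega
            -- then u = v (y 1) which is the head of Q''.support, contradicting nodup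
            have hhead : Q''.support = v (y 1) :: Q''.support.tail := Walk.support_eq_cons _
            have hnodup : Q''.support.Nodup := hQ''supp ▸ hQ'path.support_nodup
            rw [hhead] at hnodup
            have hnin := (List.nodup_cons.1 hnodup).1
            apply hnin
            have huy : v (y 1) = u := by rw [hi3, hiy1]
            subst huy
            exact hu'
      · -- support positions
        intro u hu
        rw [Walk.support_cons, List.mem_cons] at hu
        rcases hu with rfl | hu
        · exact ⟨x 0, le_refl _, by omega, rfl⟩
        · rw [Walk.support_append, List.mem_append] at hu
          rcases hu with h | h
          · obtain ⟨i, h1, h2, h3⟩ := hWpos _ h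
            exact ⟨i, by omega, by omega, h3⟩
          · obtain ⟨i, h1, h2, h3⟩ := hQ''pos _ (List.mem_of_mem_tail h)
            exact ⟨i, by omega, by omega, h3⟩
      · -- chords are covered
        intro t ht
        rw [Walk.edges_cons]
        cases t with
        | zero => exact List.mem_cons_self
        | succ t' =>
          refine List.mem_cons_of_mem _ ?_
          rw [Walk.edges_append, List.mem_append]
          right
          have hc := hQ'chords t' (by omega)
          have e1 : m - 1 - (m - 1 - y (t'+1)) = y (t'+1) := by
            have := hym (t'+1) (by omega); omega
          have e2 : m - 1 - (m - 1 - x (t'+1)) = x (t'+1) := by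
            have := hym (t'+1) (by omega); have := hxy (t'+1) (by omega); omega
          rw [e1, e2] at hc
          rw [hQ''edges, Sym2.eq_swap]
          exact hc
      · -- edges are path edges or chords
        intro e he
        rw [Walk.edges_cons, List.mem_cons] at he
        rcases he with rfl | he
        · exact Or.inr ⟨0, by omega, rfl⟩
        rw [Walk.edges_append, List.mem_append] at he
        rcases he with h | h
        · exact Or.inl (hW'edges e h)
        · rw [hQ''edges] at h
          rcases hQ'edges e h with ⟨j, hj1, hj2⟩ | ⟨t, ht, hte⟩
          · left
            refine ⟨m - 1 - (j+1), by omega, ?_⟩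
            have hjj : m - 1 - (j+1) + 1 = m - 1 - j := by omega
            rw [hjj, hj2]
            exact Sym2.eq_swap
          · right
            refine ⟨t+1, by omega, ?_⟩
            have e1 : m - 1 - (m - 1 - y (t+1)) = y (t+1) := by
              have := hym (t+1) (by omega); omega
            have e2 : m - 1 - (m - 1 - x (t+1)) = x (t+1) := by
              have := hym (t+1) (by omega); have := hxy (t+1) (by omega); omega
            rw [e1, e2] at hte
            rw [hte]
            exact Sym2.eq_swap

/-- Let `P = v_1 ⋯ v_m` be a path and let
`M = {x_1 y_1, …, x_s y_s}` be a set of pairwise nested chords of `P`: writing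
each chord `x_t y_t` with `x_t` earlier than `y_t` on `P`, the `x_t` are in
increasing order along `P` and the `y_t` are in decreasing order along `P`.
Then the graph with edge set `E(P) ∪ M` contains a path whose edge set
contains all edges of `M` and is contained in `M ∪ E(P)`. -/
theorem nested_chords_path
    {V : Type*} (G : SimpleGraph V) {a b : V} (P : G.Walk a b) (hP : P.IsPath)
    (s : ℕ) (x y : Fin s → Fin P.support.length)
    (hx : StrictMono x) (hy : StrictAnti y)
    (hxy : ∀ t, (x t : ℕ) < y t)
    (hadj : ∀ t, G.Adj (P.support.get (x t)) (P.support.get (y t)))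
    (hchord : ∀ t, s(P.support.get (x t), P.support.get (y t)) ∉ P.edges) :
    ∃ (c d : V) (Q : G.Walk c d), Q.IsPath ∧
      (∀ t, s(P.support.get (x t), P.support.get (y t)) ∈ Q.edges) ∧
      (∀ e ∈ Q.edges,
        e ∈ P.edges ∨ ∃ t, e = s(P.support.get (x t), P.support.get (y t))) := by
  rcases Nat.eq_zero_or_pos s with hs | hs
  · subst hs
    exact ⟨a, a, Walk.nil, Walk.IsPath.nil, fun t => t.elim0, by simp⟩
  set v : ℕ → V := fun i => P.support.getD i a with hv
  have hvg : ∀ (k : Fin P.support.length), v (k : ℕ) = P.support.get k := by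
    intro k
    show P.support.getD (k : ℕ) a = P.support.get k
    exact (List.getD_eq_getElem _ _ k.2).trans List.get_eq_getElem.symm
  have hinj : ∀ i j, i < P.support.length → j < P.support.length → v i = v j → i = j := by
    intro i j hi hj hij
    rw [hv] at hij
    simp only [List.getD_eq_getElem _ _ hi, List.getD_eq_getElem _ _ hj] at hij
    have hnd := hP.support_nodup
    rw [List.nodup_iff_injective_get] at hnd
    have := hnd (by simpa using hij : P.support.get ⟨i, hi⟩ = P.support.get ⟨j, hj⟩)
    simpa using congrArg Fin.val this
  -- darts give adjacency of consecutive support vertices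
  have hdart : ∀ i, i + 1 < P.support.length → ∃ d : G.Dart, d ∈ P.darts ∧ d.fst = v i ∧ d.snd = v (i+1) := by
    intro i hi
    have hsl : P.support.length = P.length + 1 := Walk.length_support P
    have hdl : i < P.darts.length := by rw [Walk.length_darts]; omega
    refine ⟨P.darts[i], List.getElem_mem _, ?_, ?_⟩
    · have h1 := congrArg (fun l => l[i]?) (Walk.map_fst_darts P)
      simp only [List.getElem?_map] at h1
      have h2 : P.darts[i]?.map (·.fst) = P.support.dropLast[i]? := h1
      rw [List.getElem?_eq_getElem hdl] at h2
      have hdll : i < P.support.dropLast.length := by simp [List.length_dropLast]; omega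
      rw [List.getElem?_eq_getElem hdll] at h2
      simp only [Option.map_some] at h2
      have h3 : P.darts[i].fst = P.support.dropLast[i] := Option.some.inj h2
      rw [h3, List.getElem_dropLast]
      exact (List.getD_eq_getElem _ a (by omega : i < P.support.length)).symm
    · have h1 := congrArg (fun l => l[i]?) (Walk.map_snd_darts P)
      simp only [List.getElem?_map] at h1
      have h2 : P.darts[i]?.map (·.snd) = P.support.tail[i]? := h1
      rw [List.getElem?_eq_getElem hdl] at h2
      have htl : i < P.support.tail.length := by simp [List.length_tail]; omega
      rw [List.getElem?_eq_getElem htl] at h2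
      simp only [Option.map_some] at h2
      have h3 : P.darts[i].snd = P.support.tail[i] := Option.some.inj h2
      rw [h3, List.getElem_tail]
      exact (List.getD_eq_getElem _ a (by omega : i + 1 < P.support.length)).symm
  have hadjP : ∀ i, i + 1 < P.support.length → G.Adj (v i) (v (i+1)) := by
    intro i hi
    obtain ⟨d, _, h1, h2⟩ := hdart i hi
    rw [← h1, ← h2]
    exact d.adj
  have hedge : ∀ i, i + 1 < P.support.length → s(v i, v (i+1)) ∈ P.edges := by
    intro i hi
    obtain ⟨d, hd, h1, h2⟩ := hdart i hi
    rw [← h1, ← h2]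
    have : s(d.fst, d.snd) = d.edge := rfl
    rw [this]
    exact List.mem_map_of_mem (f := Dart.edge) hd
  set x' : ℕ → ℕ := fun t => if h : t < s then (x ⟨t, h⟩ : ℕ) else 0 with hx'
  set y' : ℕ → ℕ := fun t => if h : t < s then (y ⟨t, h⟩ : ℕ) else 0 with hy'
  have hx'v : ∀ t (h : t < s), x' t = (x ⟨t, h⟩ : ℕ) := by intro t h; rw [hx']; simp [h]
  have hy'v : ∀ t (h : t < s), y' t = (y ⟨t, h⟩ : ℕ) := by intro t h; rw [hy']; simp [h]
  obtain ⟨d, Q, hQpath, _, hQchords, hQedges⟩ :=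
    nested_aux s P.support.length v x' y' hinj hadjP
      (by
        intro t t' htt' ht'
        rw [hx'v t (by omega), hx'v t' ht']
        exact_mod_cast hx (show (⟨t, by omega⟩ : Fin s) < (⟨t', ht'⟩ : Fin s) from htt'))
      (by
        intro t t' htt' ht'
        rw [hy'v t (by omega), hy'v t' ht']
        exact_mod_cast hy (show (⟨t, by omega⟩ : Fin s) < (⟨t', ht'⟩ : Fin s) from htt'))
      (by
        intro t ht
        rw [hx'v t ht, hy'v t ht]
        exact hxy ⟨t, ht⟩)
      (by
        intro t ht
        rw [hy'v t ht]
        exact (y ⟨t, ht⟩).2)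
      (by
        intro t ht
        rw [hx'v t ht, hy'v t ht]
        have := hadj ⟨t, ht⟩
        rwa [← hvg (x ⟨t, ht⟩), ← hvg (y ⟨t, ht⟩)] at this)
      hs
  refine ⟨v (x' 0), d, Q, hQpath, ?_, ?_⟩
  · intro t
    have h := hQchords t.val t.2
    rw [hx'v t.val t.2, hy'v t.val t.2, hvg, hvg] at h
    simpa using h
  · intro e he
    rcases hQedges e he with ⟨j, hj1, hj2⟩ | ⟨t, ht, hte⟩
    · exact Or.inl (hj2 ▸ hedge j hj1)
    · right
      refine ⟨⟨t, ht⟩, ?_⟩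
      rw [hx'v t ht, hy'v t ht, hvg, hvg] at hte
      simpa using hte
end

section
/- Let G be a graph on n vertices containing a Hamiltonian path P, and let H′ be the spanning subgraph of G whose edges are the edges of G not on P. Then there is a collection of at most 5n paths in G that separates H′ from H′, i.e., for every ordered pair (e, f) of distinct edges of G not on P, some path in the collection contains e and does not contain f. -/
open SimpleGraph

namespace SepNonpathAux

open List

variable {V : Type*} {G : SimpleGraph V}

/-- ascending walk along consecutive positions -/
noncomputable def ascW (sup : ℕ → V) (n : ℕ)
    (adjP : ∀ i, i + 1 < n → G.Adj (sup i) (sup (i+1))) :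
    (k i : ℕ) → i + k < n → G.Walk (sup i) (sup (i + k))
  | 0, _, _ => Walk.nil
  | (k+1), i, h =>
    (Walk.cons (adjP i (by omega)) (ascW sup n adjP k (i+1) (by omega))).copy rfl
      (by congr 1; omega)

lemma ascW_support (sup : ℕ → V) (n : ℕ)
    (adjP : ∀ i, i + 1 < n → G.Adj (sup i) (sup (i+1))) :
    ∀ (k i : ℕ) (h : i + k < n),
      (ascW sup n adjP k i h).support = (range (k+1)).map (fun t => sup (i+t)) := by
  intro k
  induction k with
  | zero => intro i h; simp [ascW, List.range_succ]
  | succ k ih =>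
    intro i h
    rw [ascW, Walk.support_copy, Walk.support_cons, ih (i+1) (by omega)]
    conv_rhs => rw [range_succ_eq_map, map_cons, List.map_map]
    congr 1
    apply List.map_congr_left
    intro t _
    simp only [Function.comp_apply]
    congr 1
    omega

lemma ascW_edges (sup : ℕ → V) (n : ℕ)
    (adjP : ∀ i, i + 1 < n → G.Adj (sup i) (sup (i+1))) :
    ∀ (k i : ℕ) (h : i + k < n) (e : Sym2 V), e ∈ (ascW sup n adjP k i h).edges →
      ∃ t, t + 1 ≤ k ∧ e = s(sup (i+t), sup (i+t+1)) := by
  intro k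
  induction k with
  | zero => intro i h e he; simp [ascW] at he
  | succ k ih =>
    intro i h e he
    rw [ascW, Walk.edges_copy, Walk.edges_cons] at he
    rcases List.mem_cons.1 he with h1 | h2
    · exact ⟨0, by omega, by simpa using h1⟩
    · obtain ⟨t, ht, rfl⟩ := ih (i+1) (by omega) e h2
      refine ⟨t+1, by omega, ?_⟩
      rw [show i+(t+1) = i+1+t by omega]

lemma chainWalk (sup : ℕ → V) (n : ℕ)
    (adjP : ∀ i, i + 1 < n → G.Adj (sup i) (sup (i+1)))
    (inj : ∀ i, i < n → ∀ j, j < n → sup i = sup j → i = j)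
    (PE : Sym2 V → Prop)
    (memP : ∀ i, i + 1 < n → PE s(sup i, sup (i+1))) :
    ∀ (N : ℕ) (l : List (ℕ × ℕ)), l.length ≤ N →
    ∀ (A B : ℕ) (rest : List (ℕ × ℕ)), l = (A, B) :: rest →
    l.Chain' (fun p q => p.1 < q.1 ∧ q.2 < p.2) →
    (∀ p ∈ l, p.1 < p.2 ∧ p.2 < n ∧ G.Adj (sup p.1) (sup p.2)) →
    ∃ (v : V) (w : G.Walk (sup A) v) (IL : List ℕ),
      w.support = IL.map sup ∧ (∃ t, IL = A :: t) ∧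
      (∀ i ∈ IL, A ≤ i ∧ i ≤ B ∧ i < n) ∧
      w.support.Nodup ∧
      (∀ p ∈ l, s(sup p.1, sup p.2) ∈ w.edges) ∧
      (∀ e ∈ w.edges, PE e ∨ ∃ p ∈ l, e = s(sup p.1, sup p.2)) := by
  intro N
  induction N with
  | zero => intro l hlen A B rest hl; subst hl; simp at hlen
  | succ N ih =>
    intro l hlen A B rest hl hchain hmem
    subst hl
    obtain ⟨hAB, hBn, hadjAB⟩ := hmem (A, B) (by simp)
    cases rest with
    | nil =>
      refine ⟨sup B, Walk.cons hadjAB Walk.nil, [A, B], by simp, ⟨[B], rfl⟩, ?_, ?_, ?_, ?_⟩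
      · intro i hi
        simp at hi
        rcases hi with rfl | rfl <;> omega
      · simp only [Walk.support_cons, Walk.support_nil]
        refine List.nodup_cons.2 ⟨?_, List.nodup_singleton _⟩
        intro hmem2
        simp at hmem2
        exact absurd (inj A (by omega) B hBn hmem2) (by omega)
      · intro p hp
        simp at hp
        subst hp
        simp [Walk.edges_cons]
      · intro e he
        simp [Walk.edges_cons] at he
        exact Or.inr ⟨(A, B), by simp, he⟩
    | cons q rest2 =>
      obtain ⟨A2, B2⟩ := q
      have hc1 : A < A2 ∧ B2 < B := by
        have := hchain
        unfold List.Chain' at this; rw [List.isChain_cons_cons] at this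
        exact this.1
      obtain ⟨hA2B2, hB2n, hadj2⟩ := hmem (A2, B2) (by simp)
      -- descending walk from sup B to sup B2
      have hkd : B2 + (B - B2) < n := by omega
      set dsc : G.Walk (sup B) (sup B2) :=
        ((ascW sup n adjP (B - B2) B2 hkd).copy rfl (by congr 1; omega)).reverse with hdsc
      set DL : List ℕ := (((List.range (B - B2 + 1)).map (fun t => B2 + t)).reverse) with hDL
      have hdscsup : dsc.support = DL.map sup := by
        rw [hdsc, Walk.support_reverse, Walk.support_copy, ascW_support, hDL,
          List.map_reverse, List.map_map]
        rfl
      have hDLmem : ∀ i, i ∈ DL ↔ (B2 ≤ i ∧ i ≤ B) := by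
        intro i
        rw [hDL]
        simp only [List.mem_reverse, List.mem_map, List.mem_range]
        constructor
        · rintro ⟨t, ht, rfl⟩; omega
        · intro h; exact ⟨i - B2, by omega, by omega⟩
      have hDLnodup : DL.Nodup := by
        rw [hDL]
        refine (List.nodup_reverse).2 (List.Nodup.map ?_ List.nodup_range)
        intro x y hxy; simp only at hxy; omega
      have hdscedges : ∀ e ∈ dsc.edges, PE e := by
        intro e he
        rw [hdsc, Walk.edges_reverse, List.mem_reverse, Walk.edges_copy] at he
        obtain ⟨t, ht, rfl⟩ := ascW_edges sup n adjP (B - B2) B2 hkd e he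
        exact memP (B2 + t) (by omega)
      cases rest2 with
      | nil =>
        refine ⟨sup A2, Walk.cons hadjAB (dsc.append (Walk.cons hadj2.symm Walk.nil)),
          A :: (DL ++ [A2]), ?_, ⟨_, rfl⟩, ?_, ?_, ?_, ?_⟩
        · simp only [Walk.support_cons, Walk.support_append, Walk.support_nil,
            List.map_cons, List.map_append, hdscsup]
          simp
        · intro i hi
          rcases List.mem_cons.1 hi with rfl | hi
          · omega
          · rcases List.mem_append.1 hi with hi | hi
            · rw [hDLmem] at hi; omega
            · simp at hi; omega
        · rw [show (Walk.cons hadjAB (dsc.append (Walk.cons hadj2.symm Walk.nil))).support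
              = (A :: (DL ++ [A2])).map sup from ?_]
          · refine List.Nodup.map_on ?_ ?_
            · intro x hx y hy hxy
              have hx' : x < n := by
                rcases List.mem_cons.1 hx with rfl | hx
                · omega
                · rcases List.mem_append.1 hx with hx | hx
                  · rw [hDLmem] at hx; omega
                  · simp at hx; omega
              have hy' : y < n := by
                rcases List.mem_cons.1 hy with rfl | hy
                · omega
                · rcases List.mem_append.1 hy with hy | hy
                  · rw [hDLmem] at hy; omega
                  · simp at hy; omega
              exact inj x hx' y hy' hxy
            · refine List.nodup_cons.2 ⟨?_, ?_⟩
              · intro hA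
                rcases List.mem_append.1 hA with hA | hA
                · rw [hDLmem] at hA; omega
                · simp at hA; omega
              · refine List.nodup_append'.2 ⟨hDLnodup, List.nodup_singleton _, ?_⟩
                intro x hx hx2
                rw [hDLmem] at hx
                simp at hx2
                omega
          · simp only [Walk.support_cons, Walk.support_append, Walk.support_nil,
              List.map_cons, List.map_append, hdscsup]
            simp
        · intro p hp
          rcases List.mem_cons.1 hp with rfl | hp
          · simp [Walk.edges_cons]
          · simp only [List.mem_singleton] at hp
            subst hp
            simp only [Walk.edges_cons, Walk.edges_append, Walk.edges_nil]
            rw [Sym2.eq_swap]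
            simp
        · intro e he
          simp only [Walk.edges_cons, Walk.edges_append, Walk.edges_nil] at he
          rcases List.mem_cons.1 he with rfl | he
          · exact Or.inr ⟨(A, B), by simp, rfl⟩
          · rcases List.mem_append.1 he with he | he
            · exact Or.inl (hdscedges e he)
            · simp at he
              subst he
              exact Or.inr ⟨(A2, B2), by simp, Sym2.eq_swap⟩
      | cons r rest3 =>
        obtain ⟨A3, B3⟩ := r
        have hc2 : A2 < A3 ∧ B3 < B2 := by
          have := hchain
          unfold List.Chain' at this; rw [List.isChain_cons_cons, List.isChain_cons_cons] at this
          exact this.2.1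
        obtain ⟨hA3B3, hB3n, hadj3⟩ := hmem (A3, B3) (by simp)
        obtain ⟨v3, w3, IL3, hw3sup, ⟨t3, ht3⟩, hIL3b, hw3nodup, hw3cov, hw3edges⟩ :=
          ih ((A3, B3) :: rest3) (by simp at hlen ⊢; omega) A3 B3 rest3 rfl
            (by unfold List.Chain' at hchain; rw [List.isChain_cons_cons, List.isChain_cons_cons] at hchain; exact hchain.2.2)
            (by intro p hp; exact hmem p (List.mem_cons.2 (Or.inr (List.mem_cons.2 (Or.inr hp)))))
        have hka : A2 + (A3 - A2) < n := by omega
        set asc : G.Walk (sup A2) (sup A3) :=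
          (ascW sup n adjP (A3 - A2) A2 hka).copy rfl (by congr 1; omega) with hasc
        set AL : List ℕ := (List.range (A3 - A2 + 1)).map (fun t => A2 + t) with hAL
        have hascsup : asc.support = AL.map sup := by
          rw [hasc, Walk.support_copy, ascW_support, hAL, List.map_map]
          rfl
        have hALmem : ∀ i, i ∈ AL ↔ (A2 ≤ i ∧ i ≤ A3) := by
          intro i
          rw [hAL]
          simp only [List.mem_map, List.mem_range]
          constructor
          · rintro ⟨t, ht, rfl⟩; omega
          · intro h; exact ⟨i - A2, by omega, by omega⟩
        have hALnodup : AL.Nodup := by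
          rw [hAL]
          refine List.Nodup.map ?_ List.nodup_range
          intro x y hxy; simp only at hxy; omega
        have hascedges : ∀ e ∈ asc.edges, PE e := by
          intro e he
          rw [hasc, Walk.edges_copy] at he
          obtain ⟨t, ht, rfl⟩ := ascW_edges sup n adjP (A3 - A2) A2 hka e he
          exact memP (A2 + t) (by omega)
        -- t3 facts
        have hIL3nodup : IL3.Nodup := List.Nodup.of_map sup (hw3sup ▸ hw3nodup)
        have ht3mem : ∀ i ∈ t3, A3 < i ∧ i ≤ B3 ∧ i < n := by
          intro i hi
          have h1 := hIL3b i (by rw [ht3]; simp [hi])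
          have h2 : i ≠ A3 := by
            intro h
            rw [ht3] at hIL3nodup
            exact (List.nodup_cons.1 hIL3nodup).1 (h ▸ hi)
          omega
        have hsupfull :
            (Walk.cons hadjAB (dsc.append (Walk.cons hadj2.symm (asc.append w3)))).support
              = (A :: (DL ++ (AL ++ t3))).map sup := by
          simp only [Walk.support_cons, Walk.support_append, List.tail_cons]
          rw [hdscsup, hascsup, hw3sup, ht3]
          simp
        refine ⟨v3, Walk.cons hadjAB (dsc.append (Walk.cons hadj2.symm (asc.append w3))),
          A :: (DL ++ (AL ++ t3)), hsupfull, ⟨_, rfl⟩, ?_, ?_, ?_, ?_⟩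
        · intro i hi
          rcases List.mem_cons.1 hi with rfl | hi
          · omega
          · rcases List.mem_append.1 hi with hi | hi
            · rw [hDLmem] at hi; omega
            · rcases List.mem_append.1 hi with hi | hi
              · rw [hALmem] at hi; omega
              · have := ht3mem i hi; omega
        · rw [hsupfull]
          refine List.Nodup.map_on ?_ ?_
          · intro x hx y hy hxy
            have hb : ∀ z, z ∈ A :: (DL ++ (AL ++ t3)) → z < n := by
              intro z hz
              rcases List.mem_cons.1 hz with rfl | hz
              · omega
              · rcases List.mem_append.1 hz with hz | hz
                · rw [hDLmem] at hz; omega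
                · rcases List.mem_append.1 hz with hz | hz
                  · rw [hALmem] at hz; omega
                  · have := ht3mem z hz; omega
            exact inj x (hb x hx) y (hb y hy) hxy
          · refine List.nodup_cons.2 ⟨?_, ?_⟩
            · intro hA
              rcases List.mem_append.1 hA with hA | hA
              · rw [hDLmem] at hA; omega
              · rcases List.mem_append.1 hA with hA | hA
                · rw [hALmem] at hA; omega
                · have := ht3mem A hA; omega
            · refine List.nodup_append'.2 ⟨hDLnodup, ?_, ?_⟩
              · refine List.nodup_append'.2 ⟨hALnodup, ?_, ?_⟩
                · rw [ht3] at hIL3nodup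
                  exact (List.nodup_cons.1 hIL3nodup).2
                · intro x hx hx2
                  rw [hALmem] at hx
                  have := ht3mem x hx2
                  omega
              · intro x hx hx2
                rw [hDLmem] at hx
                rcases List.mem_append.1 hx2 with hx2 | hx2
                · rw [hALmem] at hx2; omega
                · have := ht3mem x hx2; omega
        · intro p hp
          have hedges : (Walk.cons hadjAB (dsc.append (Walk.cons hadj2.symm (asc.append w3)))).edges
              = s(sup A, sup B) :: (dsc.edges ++ (s(sup B2, sup A2) :: (asc.edges ++ w3.edges))) := by
            simp [Walk.edges_cons, Walk.edges_append]
          rw [hedges]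
          rcases List.mem_cons.1 hp with rfl | hp
          · simp
          · rcases List.mem_cons.1 hp with rfl | hp
            · refine List.mem_cons.2 (Or.inr (List.mem_append.2 (Or.inr ?_)))
              rw [Sym2.eq_swap]
              simp
            · refine List.mem_cons.2 (Or.inr (List.mem_append.2 (Or.inr ?_)))
              refine List.mem_cons.2 (Or.inr (List.mem_append.2 (Or.inr ?_)))
              exact hw3cov p hp
        · intro e he
          have hedges : (Walk.cons hadjAB (dsc.append (Walk.cons hadj2.symm (asc.append w3)))).edges
              = s(sup A, sup B) :: (dsc.edges ++ (s(sup B2, sup A2) :: (asc.edges ++ w3.edges))) := by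
            simp [Walk.edges_cons, Walk.edges_append]
          rw [hedges] at he
          rcases List.mem_cons.1 he with rfl | he
          · exact Or.inr ⟨(A, B), by simp, rfl⟩
          · rcases List.mem_append.1 he with he | he
            · exact Or.inl (hdscedges e he)
            · rcases List.mem_cons.1 he with rfl | he
              · exact Or.inr ⟨(A2, B2), by simp, Sym2.eq_swap⟩
              · rcases List.mem_append.1 he with he | he
                · exact Or.inl (hascedges e he)
                · rcases hw3edges e he with h | ⟨p, hp, rfl⟩
                  · exact Or.inl h
                  · exact Or.inr ⟨p, List.mem_cons.2 (Or.inr (List.mem_cons.2 (Or.inr hp))), rfl⟩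
lemma consec_mem_edges {u v : V} (w : G.Walk u v) (d : V) :
    ∀ i, i + 1 < w.support.length →
      s(w.support.getD i d, w.support.getD (i+1) d) ∈ w.edges := by
  induction w with
  | nil => intro i hi; simp at hi
  | cons h p ih =>
    intro i hi
    match i with
    | 0 =>
      rw [Walk.support_cons, Walk.edges_cons]
      simp only [List.getD_cons_zero, List.getD_cons_succ]
      rw [p.support_eq_cons]
      simp only [List.getD_cons_zero]
      exact List.mem_cons_self
    | (j+1) =>
      rw [Walk.support_cons] at hi
      rw [Walk.support_cons, Walk.edges_cons]
      simp only [List.getD_cons_succ]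
      refine List.mem_cons.2 (Or.inr (ih j ?_))
      simp only [List.length_cons] at hi
      omega

end SepNonpathAux

open SepNonpathAux

/-- Let `G` be a graph on `n` vertices containing a
Hamiltonian path `P`, and let `H'` be the spanning subgraph of `G` whose edges
are the edges of `G` not on `P`. Then there is a collection of at most `5 n`
paths in `G` that separates `H'` from `H'`: for every ordered pair `(e, f)` of
distinct edges of `G` not on `P`, some path of the collection contains `e` and
does not contain `f`. -/
theorem separate_nonpath_edges
    {V : Type*} [Fintype V] [DecidableEq V] (G : SimpleGraph V)
    {a b : V} (P : G.Walk a b) (hP : P.IsPath ∧ P.IsHamiltonian) :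
    ∃ Ps : List (Σ u v : V, G.Walk u v),
      Ps.length ≤ 5 * Fintype.card V ∧
      (∀ p ∈ Ps, p.2.2.IsPath) ∧
      (∀ e ∈ G.edgeSet, e ∉ P.edges → ∀ f ∈ G.edgeSet, f ∉ P.edges → e ≠ f →
        ∃ p ∈ Ps, e ∈ p.2.2.edges ∧ f ∉ p.2.2.edges) := by
  classical
  obtain ⟨hPath, hHam⟩ := hP
  set n := Fintype.card V with hn
  have hnpos : 0 < n := Fintype.card_pos_iff.2 ⟨a⟩
  have hlen : P.support.length = n := by
    rw [Walk.length_support, hHam.length_eq]; omega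
  set sup : ℕ → V := fun i => P.support.getD i a with hsup
  have hinj : ∀ i, i < n → ∀ j, j < n → sup i = sup j → i = j := by
    intro i hi j hj hij
    rw [hsup] at hij
    simp only at hij
    rw [List.getD_eq_getElem _ _ (by omega : i < P.support.length),
        List.getD_eq_getElem _ _ (by omega : j < P.support.length)] at hij
    exact (List.Nodup.getElem_inj_iff hPath.support_nodup).1 hij
  have hPmem : ∀ i, i + 1 < n → s(sup i, sup (i+1)) ∈ P.edges := by
    intro i hi
    exact consec_mem_edges P a i (by omega)
  have hadjP : ∀ i, i + 1 < n → G.Adj (sup i) (sup (i+1)) := by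
    intro i hi
    exact P.adj_of_mem_edges (hPmem i hi)
  have hsurj : ∀ v : V, ∃ i, i < n ∧ sup i = v := by
    intro v
    have hv : v ∈ P.support := hHam.mem_support v
    obtain ⟨i, hi, hiv⟩ := List.getElem_of_mem hv
    exact ⟨i, by omega, by rw [hsup]; simp only; rw [List.getD_eq_getElem _ _ hi]; exact hiv⟩
  set L : (ℕ → ℕ) → List (ℕ × ℕ) := fun f =>
    (List.range n).filterMap (fun i =>
      if i < f i ∧ f i < n ∧ G.Adj (sup i) (sup (f i)) then some (i, f i) else none)
    with hL
  have hLspec : ∀ (g : ℕ → ℕ) (p : ℕ × ℕ), p ∈ L g →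
      p.1 < p.2 ∧ p.2 < n ∧ G.Adj (sup p.1) (sup p.2) ∧ p.2 = g p.1 := by
    intro g p hp
    rw [hL] at hp
    simp only [List.mem_filterMap, List.mem_range] at hp
    obtain ⟨i, hi, hpi⟩ := hp
    split_ifs at hpi with hc
    · cases Option.some.inj hpi
      exact ⟨hc.1, hc.2.1, hc.2.2, rfl⟩
  have hLmem : ∀ (g : ℕ → ℕ) (x y : ℕ), x < y → y < n → y = g x →
      G.Adj (sup x) (sup y) → (x, y) ∈ L g := by
    intro g x y hxy hyn hyg hadj
    rw [hL]
    simp only [List.mem_filterMap, List.mem_range]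
    refine ⟨x, by omega, ?_⟩
    rw [← hyg, if_pos ⟨hxy, hyn, hadj⟩]
  have key : ∀ g : ℕ → ℕ, (∀ i j, i < j → j < g j → g j < g i) →
      ∃ pq : (Σ u v : V, G.Walk u v), pq.2.2.IsPath ∧
        (∀ p ∈ L g, s(sup p.1, sup p.2) ∈ pq.2.2.edges) ∧
        (∀ e ∈ pq.2.2.edges, e ∈ P.edges ∨ ∃ p ∈ L g, e = s(sup p.1, sup p.2)) := by
    intro g hg
    have hmemL : ∀ p ∈ L g, p.1 < p.2 ∧ p.2 < n ∧ G.Adj (sup p.1) (sup p.2) := by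
      intro p hp
      have := hLspec g p hp
      tauto
    have hchainL : (L g).Chain' (fun p q => p.1 < q.1 ∧ q.2 < p.2) := by
      refine List.Pairwise.isChain ?_
      rw [hL]
      refine List.Pairwise.filterMap _ ?_ List.pairwise_lt_range
      intro i j hij p hp q hq
      split_ifs at hp hq with h1 h2
      · simp only [Option.mem_def, Option.some.injEq] at hp hq
        subst hp; subst hq
        exact ⟨hij, hg i j hij h2.1⟩
    cases hcase : L g with
    | nil =>
      exact ⟨⟨a, a, Walk.nil⟩, by simp, by simp, by simp⟩
    | cons hd tl =>
      obtain ⟨A, B⟩ := hd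
      obtain ⟨v, w, IL, _, _, _, hnodup, hcov, hedg⟩ :=
        chainWalk sup n hadjP hinj (· ∈ P.edges) hPmem ((A, B) :: tl).length
          ((A, B) :: tl) le_rfl A B tl rfl (hcase ▸ hchainL) (hcase ▸ hmemL)
      exact ⟨⟨sup A, v, w⟩, (Walk.isPath_def w).2 hnodup, hcov, hedg⟩
  have keyS : ∀ s : ℕ, ∃ pq : (Σ u v : V, G.Walk u v), pq.2.2.IsPath ∧
      (∀ p ∈ L (fun i => s - i), s(sup p.1, sup p.2) ∈ pq.2.2.edges) ∧
      (∀ e ∈ pq.2.2.edges, e ∈ P.edges ∨ ∃ p ∈ L (fun i => s - i),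
        e = s(sup p.1, sup p.2)) :=
    fun s => key (fun i => s - i) (by intro i j hij hj; omega)
  have keyB : ∀ c : ℕ, ∃ pq : (Σ u v : V, G.Walk u v), pq.2.2.IsPath ∧
      (∀ p ∈ L (fun i => c - 2*i), s(sup p.1, sup p.2) ∈ pq.2.2.edges) ∧
      (∀ e ∈ pq.2.2.edges, e ∈ P.edges ∨ ∃ p ∈ L (fun i => c - 2*i),
        e = s(sup p.1, sup p.2)) :=
    fun c => key (fun i => c - 2*i) (by intro i j hij hj; omega)
  choose WS hWS1 hWS2 hWS3 using keyS
  choose WB hWB1 hWB2 hWB3 using keyB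
  refine ⟨(List.range (2*n)).map WS ++ (List.range (3*n)).map WB, ?_, ?_, ?_⟩
  · simp; omega
  · intro p hp
    rcases List.mem_append.1 hp with hp | hp <;> obtain ⟨m, _, rfl⟩ := List.mem_map.1 hp
    · exact hWS1 m
    · exact hWB1 m
  · intro e he hePE f hf hfPE hef
    induction e using Sym2.ind with
    | _ u v =>
    have huv : G.Adj u v := (G.mem_edgeSet).1 he
    obtain ⟨x, hx, hxu⟩ := hsurj u
    obtain ⟨y, hy, hyv⟩ := hsurj v
    have main : ∀ (x y : ℕ), x < y → y < n → G.Adj (sup x) (sup y) →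
        s(sup x, sup y) = s(u, v) →
        ∃ p ∈ (List.range (2*n)).map WS ++ (List.range (3*n)).map WB,
          s(u, v) ∈ p.2.2.edges ∧ f ∉ p.2.2.edges := by
      intro x y hxy hyn hadj heq
      have memS : (x, y) ∈ L (fun i => (x + y) - i) :=
        hLmem _ x y hxy hyn (by omega) hadj
      have memB : (x, y) ∈ L (fun i => (2*x + y) - 2*i) :=
        hLmem _ x y hxy hyn (by omega) hadj
      have eS : s(u, v) ∈ (WS (x + y)).2.2.edges := by
        rw [← heq]; exact hWS2 (x + y) (x, y) memS
      have eB : s(u, v) ∈ (WB (2*x + y)).2.2.edges := by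
        rw [← heq]; exact hWB2 (2*x + y) (x, y) memB
      by_cases hfS : f ∈ (WS (x + y)).2.2.edges
      · refine ⟨WB (2*x + y), ?_, eB, ?_⟩
        · refine List.mem_append.2 (Or.inr (List.mem_map.2 ⟨2*x + y, ?_, rfl⟩))
          rw [List.mem_range]; omega
        · intro hfB
          rcases hWS3 (x + y) f hfS with hfP | ⟨p, hp, hfp⟩
          · exact hfPE hfP
          · rcases hWB3 (2*x + y) f hfB with hfP | ⟨q, hq, hfq⟩
            · exact hfPE hfP
            · obtain ⟨hp1, hp2, _, hp4⟩ := hLspec _ p hp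
              obtain ⟨hq1, hq2, _, hq4⟩ := hLspec _ q hq
              rw [hfp] at hfq
              rw [Sym2.eq_iff] at hfq
              have hpq : p.1 = q.1 ∧ p.2 = q.2 := by
                rcases hfq with ⟨h1, h2⟩ | ⟨h1, h2⟩
                · exact ⟨hinj _ (by omega) _ (by omega) h1,
                    hinj _ (by omega) _ (by omega) h2⟩
                · have e1 := hinj _ (by omega) _ (by omega) h1
                  have e2 := hinj _ (by omega) _ (by omega) h2
                  omega
              have hx1 : p.1 = x ∧ p.2 = y := by omega
              apply hef
              rw [← heq, hfp, hx1.1, hx1.2]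
      · refine ⟨WS (x + y), ?_, eS, hfS⟩
        refine List.mem_append.2 (Or.inl (List.mem_map.2 ⟨x + y, ?_, rfl⟩))
        rw [List.mem_range]; omega
    have hxyne : x ≠ y := by
      intro h
      apply huv.ne
      rw [← hxu, ← hyv, h]
    rcases Nat.lt_or_ge x y with hxy | hxy
    · exact main x y hxy hy (by rw [hxu, hyv]; exact huv) (by rw [hxu, hyv])
    · have hyx : y < x := by omega
      refine main y x hyx hx (by rw [hxu, hyv]; exact huv.symm) ?_
      rw [hxu, hyv, Sym2.eq_swap]
end
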